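/- arXiv:1607.02803 — 5 statements merged into one kernel-verified Lean document; each statement's English description precedes it below -/
import Mathlib

section
/- Let λ be a partition of e-weight w whose label z(λ) = (z₁, ..., z_w) is 1-increasing, i.e. z_{i+1} - z_i ≥ 1 for all i. Then every component λ^{(j)} of the e-quotient of λ is a hook partition, i.e. satisfies (λ^{(j)})₂ ≤ 1. -/
/-- The set of β-numbers of a partition given by its (0-indexed) parts function. -/
def betaSet (lam : ℕ → ℕ) : Set ℤ :=
  {x : ℤ | ∃ i : ℕ, x = (lam i : ℤ) - ((i : ℤ) + 1)}

/-- `wt e B b`: number of unoccupied positions above `b` on its runner. -/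
noncomputable def wt (e : ℕ) (B : Set ℤ) (b : ℤ) : ℕ :=
  Set.ncard {x : ℤ | x < b ∧ (e : ℤ) ∣ b - x ∧ x ∉ B}

/-- `(b; q)` is a bead movement: `b ∈ B`, `q = b - i·e` for some `0 ≤ i < wt e B b`. -/
def IsBM (e : ℕ) (B : Set ℤ) (b q : ℤ) : Prop :=
  b ∈ B ∧ ∃ i : ℕ, q = b - (i : ℤ) * e ∧ i < wt e B b

/-- The armlength of a bead movement starting at `q`. -/
noncomputable def zOf (e : ℕ) (B : Set ℤ) (q : ℤ) : ℕ :=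
  Set.ncard {t : ℤ | q - e < t ∧ t ≤ q ∧ t ∉ B}

/-- Every component of the `e`-quotient is a hook: on each runner there is at most one
bead of weight at least `2`. -/
def HookQuotient (e : ℕ) (B : Set ℤ) : Prop :=
  ∀ b b' : ℤ, b ∈ B → b' ∈ B → (e : ℤ) ∣ b - b' →
    2 ≤ wt e B b → 2 ≤ wt e B b' → b = b'

/-
If `b` has weight at least `2` and `c` is the first bead below `b` on its runner, with
`k - 1` gaps in between, then `wt c = wt b + (k - 1) > k`, so `c` can be moved up to `b`.
The bead movements `(b; b)` and `(c; b)` then have the same armlength, although the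
second is strictly larger, which contradicts `1`-increasingness of the label.
-/

namespace Abacus

variable {e : ℕ} {B : Set ℤ}

def runnerGaps (e : ℕ) (B : Set ℤ) (b : ℤ) : Set ℤ :=
  {x : ℤ | x < b ∧ (e : ℤ) ∣ b - x ∧ x ∉ B}

theorem wt_eq_ncard_runnerGaps (b : ℤ) : wt e B b = (runnerGaps e B b).ncard := rfl

theorem runnerGaps_add_self (he : 0 < e) (c : ℤ) :
    runnerGaps e B (c + e) = runnerGaps e B c ∪ ({c} \ B) := by
  ext x
  simp only [runnerGaps, Set.mem_union, Set.mem_ofPred_eq, Set.mem_sdiff, Set.mem_singleton_iff]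
  constructor
  · rintro ⟨hlt, ⟨m, hm⟩, hx⟩
    have hm_pos : 0 < m := by nlinarith
    rcases (show m = 1 ∨ 2 ≤ m by omega) with rfl | hm_two
    · exact Or.inr ⟨by linarith, hx⟩
    · exact Or.inl ⟨by nlinarith, ⟨m - 1, by linarith [mul_sub_one (e : ℤ) m]⟩, hx⟩
  · rintro (⟨hlt, ⟨m, hm⟩, hx⟩ | ⟨rfl, hx⟩)
    · exact ⟨by linarith, ⟨m + 1, by linarith [mul_add_one (e : ℤ) m]⟩, hx⟩
    · exact ⟨by omega, by simp, hx⟩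

theorem runnerGaps_add_self_finite (he : 0 < e) {c : ℤ} (hfin : (runnerGaps e B c).Finite) :
    (runnerGaps e B (c + e)).Finite :=
  runnerGaps_add_self he c ▸ hfin.union (Set.toFinite _)

theorem wt_add_self_of_mem (he : 0 < e) {c : ℤ} (hc : c ∈ B) : wt e B (c + e) = wt e B c := by
  rw [wt_eq_ncard_runnerGaps, runnerGaps_add_self he, Set.union_eq_left.mpr,
    wt_eq_ncard_runnerGaps]
  rintro x ⟨rfl, hx⟩
  exact (hx hc).elim

theorem wt_add_self_of_notMem (he : 0 < e) {c : ℤ} (hc : c ∉ B)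
    (hfin : (runnerGaps e B c).Finite) : wt e B (c + e) = wt e B c + 1 := by
  have hc_gap : c ∉ runnerGaps e B c := fun h ↦ h.1.false
  rw [wt_eq_ncard_runnerGaps, runnerGaps_add_self he, Set.union_comm,
    sdiff_eq_left.mpr (Set.disjoint_singleton_left.mpr hc), Set.singleton_union,
    Set.ncard_insert_of_notMem hc_gap hfin, wt_eq_ncard_runnerGaps]

theorem wt_add_mul_of_forall_notMem (he : 0 < e) {c : ℤ} (hfin : (runnerGaps e B c).Finite)
    {i : ℕ} (hgap : ∀ j < i, c + j * e ∉ B) : wt e B (c + i * e) = wt e B c + i := by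
  induction i generalizing c with
  | zero => simp
  | succ i ih =>
    have hc : c ∉ B := by simpa using hgap 0 i.succ_pos
    have hshift : ∀ j < i, c + e + j * e ∉ B := fun j hj ↦ by
      simpa [add_mul, add_assoc, add_comm (e : ℤ)] using hgap (j + 1) (by omega)
    calc wt e B (c + ↑(i + 1) * e) = wt e B (c + e + i * e) := by push_cast; ring_nf
      _ = wt e B c + (i + 1) := by
        rw [ih (runnerGaps_add_self_finite he hfin) hshift, wt_add_self_of_notMem he hc hfin]
        ring

theorem isBM_self {b : ℤ} (hb : b ∈ B) (hwt : 0 < wt e B b) : IsBM e B b b :=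
  ⟨hb, 0, by simp, hwt⟩

theorem exists_isBM_of_two_le_wt {b b' : ℤ} (hb : b ∈ B) (hb' : b' ∈ B) (hlt : b < b')
    (hdvd : (e : ℤ) ∣ b' - b) (hwt : 2 ≤ wt e B b) : ∃ c, b < c ∧ IsBM e B c b := by
  classical
  obtain ⟨m, hm⟩ := hdvd
  have he : 0 < e := Nat.pos_of_ne_zero fun he ↦ by simp [he] at hm; omega
  have hm_pos : 0 < m := by nlinarith
  have hbead : ∃ i : ℕ, b + e + i * e ∈ B :=
    ⟨(m - 1).toNat, by rw [Int.toNat_of_nonneg (by omega)]; convert hb' using 1; linarith⟩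
  set i := Nat.find hbead
  have hfin : (runnerGaps e B b).Finite := Set.finite_of_ncard_ne_zero (by
    rw [← wt_eq_ncard_runnerGaps]; omega)
  have hwt_bead : wt e B (b + e + i * e) = wt e B b + i := by
    rw [wt_add_mul_of_forall_notMem he (runnerGaps_add_self_finite he hfin)
      (fun j hj ↦ Nat.find_min hbead hj), wt_add_self_of_mem he hb]
  have hi_nonneg : (0 : ℤ) ≤ i * e := by positivity
  refine ⟨b + e + i * e, by linarith, Nat.find_spec hbead, i + 1, by push_cast; ring, ?_⟩
  omega

theorem hookQuotient_of_zOf_lt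
    (hinc : ∀ b q b' q' : ℤ, IsBM e B b q → IsBM e B b' q' →
      (q < q' ∨ (q = q' ∧ b < b')) → zOf e B q < zOf e B q') :
    HookQuotient e B := by
  have no_bead_below {b b' : ℤ} (hb : b ∈ B) (hb' : b' ∈ B) (hlt : b < b')
      (hdvd : (e : ℤ) ∣ b' - b) (hwt : 2 ≤ wt e B b) : False := by
    obtain ⟨c, hbc, hc⟩ := exists_isBM_of_two_le_wt hb hb' hlt hdvd hwt
    exact (hinc b b c b (isBM_self hb (by omega)) hc (Or.inr ⟨rfl, hbc⟩)).false
  intro b b' hb hb' hdvd hwt hwt'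
  rcases lt_trichotomy b b' with hlt | heq | hgt
  · exact (no_bead_below hb hb' hlt (dvd_sub_comm.mp hdvd) hwt).elim
  · exact heq
  · exact (no_bead_below hb' hb hgt hdvd hwt').elim

end Abacus

theorem stmt_6_general (e : ℕ) (lam : ℕ → ℕ)
    (hinc : ∀ b q b' q' : ℤ, IsBM e (betaSet lam) b q → IsBM e (betaSet lam) b' q' →
      (q < q' ∨ (q = q' ∧ b < b')) →
      zOf e (betaSet lam) q < zOf e (betaSet lam) q') :
    HookQuotient e (betaSet lam) :=
  Abacus.hookQuotient_of_zOf_lt hinc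

/-- If `z(λ)` is `1`-increasing, i.e. the armlengths are strictly increasing along the
(reverse-lexicographic) total order on bead movements, then `λ` is a hook-quotient
partition. -/
theorem stmt_6 (e : ℕ) (he : 2 ≤ e) (lam : ℕ → ℕ) (hanti : Antitone lam)
    (hev : ∃ N, ∀ i ≥ N, lam i = 0)
    (hinc : ∀ b q b' q' : ℤ, IsBM e (betaSet lam) b q → IsBM e (betaSet lam) b' q' →
      (q < q' ∨ (q = q' ∧ b < b')) →
      zOf e (betaSet lam) q < zOf e (betaSet lam) q') :
    HookQuotient e (betaSet lam) :=
  stmt_6_general e lam hinc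
end

section
/- Let λ be a hook-quotient partition of e-weight w, let Γ ⊆ {1,...,w}, and write ε_Γ^λ = Σ_{a∈Γ} ε_a^λ = (z₁, ..., z_w) ∈ ℤ^w. Then -2 ≤ z_i ≤ 1 for all i. -/
/-- The `i`-th and `j`-th bead movements lie on the same runner. -/
def SameRunner (e : ℕ) {w : ℕ} (bm : Fin w → ℤ × ℤ) (i j : Fin w) : Prop :=
  (e : ℤ) ∣ (bm j).2 - (bm i).2

/-- `p` is the distinguished index of the runner class of `i`: the earliest (final)
bead movement of the bottom bead of that runner. -/
def IsPivot (e : ℕ) {w : ℕ} (bm : Fin w → ℤ × ℤ) (i p : Fin w) : Prop :=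
  SameRunner e bm i p ∧
  (∃ mx, SameRunner e bm i mx ∧ (∀ k, SameRunner e bm i k → k ≤ mx) ∧
    (bm p).1 = (bm mx).1) ∧
  (∀ p', SameRunner e bm i p' → (bm p').1 = (bm p).1 → p ≤ p')

/-- `eps` is the family of `λ`-modified basis vectors: `eps i = e_i` if `i` is the
pivot of its runner class, and `eps i = e_i - e_j` where `j` is the neighbour of `i`
in its runner class on the side of the pivot. -/
def ModifiedBasisSpec (e : ℕ) {w : ℕ} (bm : Fin w → ℤ × ℤ)
    (eps : Fin w → Fin w → ℤ) : Prop :=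
  ∀ i : Fin w,
    (IsPivot e bm i i → eps i = Pi.single i (1 : ℤ)) ∧
    (∀ p, IsPivot e bm i p → i < p →
      ∃ j, SameRunner e bm i j ∧ i < j ∧ (∀ k, SameRunner e bm i k → i < k → j ≤ k) ∧
        eps i = Pi.single i (1 : ℤ) - Pi.single j (1 : ℤ)) ∧
    (∀ p, IsPivot e bm i p → p < i →
      ∃ j, SameRunner e bm i j ∧ j < i ∧ (∀ k, SameRunner e bm i k → k < i → k ≤ j) ∧
        eps i = Pi.single i (1 : ℤ) - Pi.single j (1 : ℤ))

/-!
`ε_a^λ` has entry `1` in coordinate `a` and, unless `a` is the pivot of its runner, a single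
entry `-1` in the coordinate of the index adjacent to `a` on its runner, on the side of the pivot.
So coordinate `i` of `ε_Γ^λ` gets a `+1` only from `a = i`, and a `-1` only from the index
immediately before `i` on its runner or the one immediately after it.
-/

section Runner

variable {e w : ℕ} {bm : Fin w → ℤ × ℤ}

theorem SameRunner.refl (i : Fin w) : SameRunner e bm i i := by
  simp [SameRunner]

theorem SameRunner.symm {i j : Fin w} (h : SameRunner e bm i j) : SameRunner e bm j i :=
  dvd_sub_comm.mp h

theorem SameRunner.trans {i j k : Fin w} (hij : SameRunner e bm i j)
    (hjk : SameRunner e bm j k) : SameRunner e bm i k := by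
  simpa [SameRunner] using dvd_add hjk hij

theorem exists_isPivot (e : ℕ) (bm : Fin w → ℤ × ℤ) (i : Fin w) : ∃ p, IsPivot e bm i p := by
  classical
  obtain ⟨mx, hmx, hmx_max⟩ := (Finset.univ.filter (SameRunner e bm i)).exists_max_image id
    ⟨i, by simp [SameRunner.refl]⟩
  obtain ⟨p, hp, hp_min⟩ := (Finset.univ.filter fun k =>
      SameRunner e bm i k ∧ (bm k).1 = (bm mx).1).exists_min_image id
    ⟨mx, by simp_all⟩
  simp only [Finset.mem_filter, Finset.mem_univ, true_and, id] at hmx hmx_max hp hp_min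
  exact ⟨p, hp.1, ⟨mx, hmx, fun k hk => hmx_max k hk, hp.2⟩,
    fun p' hp' hb => hp_min p' ⟨hp', hb.trans hp.2⟩⟩

def IsNextOnRunner (e : ℕ) (bm : Fin w → ℤ × ℤ) (a j : Fin w) : Prop :=
  SameRunner e bm a j ∧ a < j ∧ ∀ k, SameRunner e bm a k → a < k → j ≤ k

def IsPrevOnRunner (e : ℕ) (bm : Fin w → ℤ × ℤ) (a j : Fin w) : Prop :=
  SameRunner e bm a j ∧ j < a ∧ ∀ k, SameRunner e bm a k → k < a → k ≤ j

theorem IsNextOnRunner.left_unique {a b i : Fin w} (ha : IsNextOnRunner e bm a i)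
    (hb : IsNextOnRunner e bm b i) : a = b := by
  by_contra hne
  rcases lt_or_gt_of_ne hne with hab | hba
  · exact (ha.2.2 b (ha.1.trans hb.1.symm) hab).not_gt hb.2.1
  · exact (hb.2.2 a (hb.1.trans ha.1.symm) hba).not_gt ha.2.1

theorem IsPrevOnRunner.left_unique {a b i : Fin w} (ha : IsPrevOnRunner e bm a i)
    (hb : IsPrevOnRunner e bm b i) : a = b := by
  by_contra hne
  rcases lt_or_gt_of_ne hne with hab | hba
  · exact (hb.2.2 a (hb.1.trans ha.1.symm) hab).not_gt ha.2.1
  · exact (ha.2.2 b (ha.1.trans hb.1.symm) hba).not_gt hb.2.1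

end Runner

namespace ModifiedBasisSpec

variable {e w : ℕ} {bm : Fin w → ℤ × ℤ} {eps : Fin w → Fin w → ℤ}

theorem eq_single_or_eq_sub_single (heps : ModifiedBasisSpec e bm eps) (a : Fin w) :
    eps a = Pi.single a 1 ∨ ∃ j, (IsNextOnRunner e bm a j ∨ IsPrevOnRunner e bm a j) ∧
      eps a = Pi.single a 1 - Pi.single j 1 := by
  obtain ⟨p, hp⟩ := exists_isPivot e bm a
  rcases lt_trichotomy a p with hap | rfl | hpa
  · obtain ⟨j, hj, hlt, hmin, hj_eq⟩ := (heps a).2.1 p hp hap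
    exact Or.inr ⟨j, Or.inl ⟨hj, hlt, hmin⟩, hj_eq⟩
  · exact Or.inl ((heps a).1 hp)
  · obtain ⟨j, hj, hlt, hmax, hj_eq⟩ := (heps a).2.2 p hp hpa
    exact Or.inr ⟨j, Or.inr ⟨hj, hlt, hmax⟩, hj_eq⟩

theorem apply_le_single (heps : ModifiedBasisSpec e bm eps) (a i : Fin w) :
    eps a i ≤ (Pi.single a 1 : Fin w → ℤ) i := by
  rcases eq_single_or_eq_sub_single heps a with h | ⟨j, -, h⟩ <;> rw [h]
  simp only [Pi.sub_apply, Pi.single_apply]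
  split_ifs <;> norm_num

open Classical in
theorem neg_indicator_le_apply (heps : ModifiedBasisSpec e bm eps) (a i : Fin w) :
    -(if IsNextOnRunner e bm a i then 1 else 0) - (if IsPrevOnRunner e bm a i then 1 else 0)
      ≤ eps a i := by
  rcases eq_single_or_eq_sub_single heps a with h | ⟨j, hj, h⟩ <;> rw [h]
  · simp only [Pi.single_apply]
    split_ifs <;> norm_num
  · by_cases hji : j = i
    · subst hji
      simp only [Pi.sub_apply, Pi.single_apply]
      rcases hj with hj | hj <;> simp only [hj] <;> split_ifs <;> norm_num
    · simp only [Pi.sub_apply, Pi.single_apply, Ne.symm hji, if_false]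
      split_ifs <;> norm_num

theorem sum_apply_le_one (heps : ModifiedBasisSpec e bm eps) (Γ : Finset (Fin w)) (i : Fin w) :
    (∑ a ∈ Γ, eps a) i ≤ 1 := by
  classical
  calc (∑ a ∈ Γ, eps a) i = ∑ a ∈ Γ, eps a i := Finset.sum_apply i Γ eps
    _ ≤ ∑ a ∈ Γ, (Pi.single a 1 : Fin w → ℤ) i := Finset.sum_le_sum fun a _ => apply_le_single heps a i
    _ = if i ∈ Γ then 1 else 0 := Finset.sum_pi_single i _ Γ
    _ ≤ 1 := by split_ifs <;> norm_num

theorem neg_two_le_sum_apply (heps : ModifiedBasisSpec e bm eps) (Γ : Finset (Fin w))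
    (i : Fin w) : -2 ≤ (∑ a ∈ Γ, eps a) i := by
  classical
  have hnext : (Γ.filter (IsNextOnRunner e bm · i)).card ≤ 1 := Finset.card_le_one.mpr
    fun a ha b hb => (Finset.mem_filter.mp ha).2.left_unique (Finset.mem_filter.mp hb).2
  have hprev : (Γ.filter (IsPrevOnRunner e bm · i)).card ≤ 1 := Finset.card_le_one.mpr
    fun a ha b hb => (Finset.mem_filter.mp ha).2.left_unique (Finset.mem_filter.mp hb).2
  calc (-2 : ℤ)
      ≤ -((Γ.filter (IsNextOnRunner e bm · i)).card : ℤ)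
          - (Γ.filter (IsPrevOnRunner e bm · i)).card := by omega
    _ = ∑ a ∈ Γ, (-(if IsNextOnRunner e bm a i then 1 else 0)
          - (if IsPrevOnRunner e bm a i then 1 else 0)) := by
      simp only [Finset.sum_sub_distrib, Finset.sum_neg_distrib, Finset.sum_boole]
    _ ≤ ∑ a ∈ Γ, eps a i := Finset.sum_le_sum fun a _ => neg_indicator_le_apply heps a i
    _ = (∑ a ∈ Γ, eps a) i := (Finset.sum_apply i Γ eps).symm

end ModifiedBasisSpec

theorem stmt_8_general (e : ℕ) (w : ℕ)
    (bm : Fin w → ℤ × ℤ)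
    (eps : Fin w → Fin w → ℤ)
    (heps : ModifiedBasisSpec e bm eps)
    (Γ : Finset (Fin w)) :
    ∀ i : Fin w, -2 ≤ (∑ a ∈ Γ, eps a) i ∧ (∑ a ∈ Γ, eps a) i ≤ 1 := fun i =>
  ⟨ModifiedBasisSpec.neg_two_le_sum_apply heps Γ i,
    ModifiedBasisSpec.sum_apply_le_one heps Γ i⟩

/-- For any hook-quotient partition `λ` of `e`-weight `w` and any `Γ ⊆ [1,w]`, every
coordinate of `ε_Γ^λ = Σ_{a ∈ Γ} ε_a^λ` lies in `[-2, 1]`. -/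
theorem stmt_8 (e : ℕ) (he : 2 ≤ e) (w : ℕ) (lam : ℕ → ℕ)
    (hanti : Antitone lam) (hev : ∃ N, ∀ i ≥ N, lam i = 0)
    (hquot : HookQuotient e (betaSet lam))
    (bm : Fin w → ℤ × ℤ)
    (hbm1 : ∀ i, IsBM e (betaSet lam) (bm i).1 (bm i).2)
    (hbm2 : ∀ b q : ℤ, IsBM e (betaSet lam) b q → ∃ i, bm i = (b, q))
    (hbm3 : StrictMono fun i => (bm i).2)
    (eps : Fin w → Fin w → ℤ)
    (heps : ModifiedBasisSpec e bm eps)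
    (Γ : Finset (Fin w)) :
    ∀ i : Fin w, -2 ≤ (∑ a ∈ Γ, eps a) i ∧ (∑ a ∈ Γ, eps a) i ≤ 1 :=
  stmt_8_general e w bm eps heps Γ
end

section
/- Fix w ≥ 1. Given integers r ≥ 0, w ≥ j ≥ 0, there is a unique representation w - j = n(n+r) + cn + d with n ≥ 0, c ∈ {0,1}, and 0 ≤ d ≤ n - 1 + c(r+1). -/
/-!
The intervals `[n(n+r), n(n+r)+n)` (`c = 0`) and `[n(n+r)+n, (n+1)(n+1+r))` (`c = 1`), for
`n = 0, 1, 2, …`, tile the nonnegative integers in increasing order, and `d` is the offset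
of `w - j` inside the interval containing it. Existence follows by stepping through the tiling
one integer at a time; uniqueness because `n ↦ n(n+r)` is monotone, so the block index `n` is
determined by `n(n+r) ≤ m < (n+1)(n+1+r)`, and then `c` by comparing `m - n(n+r)` with `n`.
-/

def IsQuadRep (r m : ℤ) (p : ℤ × ℤ × ℤ) : Prop :=
  0 ≤ p.1 ∧ (p.2.1 = 0 ∨ p.2.1 = 1) ∧
    0 ≤ p.2.2 ∧ p.2.2 ≤ p.1 - 1 + p.2.1 * (r + 1) ∧
    m = p.1 * (p.1 + r) + p.2.1 * p.1 + p.2.2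

namespace IsQuadRep

variable {r m : ℤ}

theorem exists_succ (hr : -1 ≤ r) {p : ℤ × ℤ × ℤ} (h : IsQuadRep r m p) :
    ∃ q, IsQuadRep r (m + 1) q := by
  obtain ⟨n, c, d⟩ := p
  obtain ⟨hn, hc, hd, hdle, rfl⟩ : 0 ≤ n ∧ (c = 0 ∨ c = 1) ∧ 0 ≤ d ∧ d ≤ n - 1 + c * (r + 1) ∧
    m = n * (n + r) + c * n + d := h
  rcases hdle.lt_or_eq with hlt | rfl
  · exact ⟨(n, c, d + 1), hn, hc, by linarith, by linarith, by ring⟩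
  rcases hc with rfl | rfl
  · exact ⟨(n, 1, 0), hn, .inr rfl, le_rfl, by dsimp only; linarith, by ring⟩
  · exact ⟨(n + 1, 0, 0), by linarith, .inl rfl, le_rfl, by dsimp only; linarith, by ring⟩

theorem exists_of_nonneg (hr : 0 ≤ r) (hm : 0 ≤ m) : ∃ p, IsQuadRep r m p := by
  induction m, hm using Int.leInduction with
  | base => exact ⟨(0, 1, 0), le_rfl, .inr rfl, le_rfl, by simpa using hr, by ring⟩
  | succ m _ ih =>
    obtain ⟨p, hp⟩ := ih
    exact hp.exists_succ (by linarith)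

theorem mem_block (hr : -1 ≤ r) {p : ℤ × ℤ × ℤ} (h : IsQuadRep r m p) :
    p.1 * (p.1 + r) ≤ m ∧ m < (p.1 + 1) * (p.1 + 1 + r) := by
  obtain ⟨n, c, d⟩ := p
  obtain ⟨hn, hc, hd, hdle, rfl⟩ := h
  rcases hc with rfl | rfl <;> constructor <;> simp only at * <;> nlinarith

theorem block_index_unique (hr : -1 ≤ r) {n n' : ℤ} (hn : 0 ≤ n) (hn' : 0 ≤ n')
    (h : n * (n + r) ≤ m ∧ m < (n + 1) * (n + 1 + r))
    (h' : n' * (n' + r) ≤ m ∧ m < (n' + 1) * (n' + 1 + r)) : n = n' := by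
  -- `n ↦ n(n+r)` is monotone on `n ≥ 0`: `k(k+r) - l(l+r) = (k-l)(k+l+r)`.
  have block_mono : ∀ k l : ℤ, 0 < l → l ≤ k → l * (l + r) ≤ k * (k + r) := fun k l hl hlk => by
    nlinarith [mul_nonneg (sub_nonneg.2 hlk) (by linarith : 0 ≤ k + l + r)]
  by_contra hne
  rcases lt_or_gt_of_ne hne with hlt | hlt
  · linarith [block_mono n' (n + 1) (by linarith) hlt]
  · linarith [block_mono n (n' + 1) (by linarith) hlt]

theorem unique (hr : -1 ≤ r) {p q : ℤ × ℤ × ℤ} (hp : IsQuadRep r m p) (hq : IsQuadRep r m q) :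
    p = q := by
  have hn : p.1 = q.1 :=
    block_index_unique hr hp.1 hq.1 (hp.mem_block hr) (hq.mem_block hr)
  obtain ⟨n, c, d⟩ := p
  obtain ⟨n', c', d'⟩ := q
  obtain ⟨hn0, hc, hd, hdle, rfl⟩ := hp
  obtain ⟨-, hc', hd', hdle', heq⟩ := hq
  simp only at hn
  subst hn
  rcases hc with rfl | rfl <;> rcases hc' with rfl | rfl <;> simp only at * <;>
    ext <;> simp only <;> linarith

end IsQuadRep

theorem stmt_12_general (r w j : ℤ) (hr : 0 ≤ r) (hjw : j ≤ w) :
    ∃! p : ℤ × ℤ × ℤ,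
      0 ≤ p.1 ∧ (p.2.1 = 0 ∨ p.2.1 = 1) ∧
      0 ≤ p.2.2 ∧ p.2.2 ≤ p.1 - 1 + p.2.1 * (r + 1) ∧
      w - j = p.1 * (p.1 + r) + p.2.1 * p.1 + p.2.2 :=
  existsUnique_of_exists_of_unique (IsQuadRep.exists_of_nonneg hr (sub_nonneg.2 hjw))
    fun _ _ => IsQuadRep.unique (by linarith)

/-- Given integers `r ≥ 0` and `w ≥ j ≥ 0` (with `w ≥ 1`), there is a unique
representation `w - j = n(n+r) + cn + d` with `n ≥ 0`, `c ∈ {0,1}` and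
`0 ≤ d ≤ n - 1 + c(r+1)`. -/
theorem stmt_12 (r w j : ℤ) (hr : 0 ≤ r) (hw1 : 1 ≤ w) (hj : 0 ≤ j) (hjw : j ≤ w) :
    ∃! p : ℤ × ℤ × ℤ,
      0 ≤ p.1 ∧ (p.2.1 = 0 ∨ p.2.1 = 1) ∧
      0 ≤ p.2.2 ∧ p.2.2 ≤ p.1 - 1 + p.2.1 * (r + 1) ∧
      w - j = p.1 * (p.1 + r) + p.2.1 * p.1 + p.2.2 :=
  stmt_12_general r w j hr hjw
end

section
/- Let λ be a hook-quotient partition of e-weight w with bead movements starting at positions q₁ < ... < q_w, and let λ' be its conjugate, with bead movements starting at q'₁ < ... < q'_w. Then q'ᵢ = 1 - q_{w+1-i} + e for all i ∈ {1, ..., w}. Moreover, writing z(λ) = (z₁,...,z_w) and z(λ') = (z'₁,...,z'_w), one has zᵢ + z'_{w+1-i} = e - [q_i ∈ β(λ)] + [q_i - e ∈ β(λ)], where [·] is 1 if the condition holds and 0 otherwise. -/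
open scoped Classical

/-- `x` is the starting position of a bead movement of the partition with bead set
`B`: there is a bead `b ≥ x` on the runner of `x` and an unoccupied position `c < x`
on the runner of `x`. -/
def IsStart (e : ℕ) (B : Set ℤ) (x : ℤ) : Prop :=
  (∃ b, b ∈ B ∧ x ≤ b ∧ (e : ℤ) ∣ b - x) ∧
  (∃ c, c ∉ B ∧ c < x ∧ (e : ℤ) ∣ x - c)

/-!
Reflecting the abacus through `t ↦ 1 - t` exchanges beads and holes. A bead `b ≥ x` and a hole
`c < x` on the runner of `x` thus become a hole `1 - b` and a bead `1 - c` on the runner of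
`1 - x + e`, and `1 - c ≥ 1 - x + e` because `c` lies at least `e` below `x`. So the starts of
`λ'` are the images `1 - q + e` of the starts of `λ`; the reflection reverses their order.
Under the same reflection the holes of `λ'` in `(1 - q, 1 - q + e]` are the beads of `λ` in
`[q - e, q)`; together with the holes of `λ` in `(q - e, q]` they fill a window of `e` positions,
up to the exchange of the endpoint `q` for `q - e`.
-/

open Finset

theorem Finset.card_filter_Ico_add_ite {α : Type*} [PartialOrder α] [LocallyFiniteOrder α]
    (p : α → Prop) [DecidablePred p] {a b : α} (hab : a ≤ b) :
    #{x ∈ Ico a b | p x} + (if p b then 1 else 0) =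
      #{x ∈ Ioc a b | p x} + (if p a then 1 else 0) := by
  have hIco := congrArg (fun s => #{x ∈ s | p x}) (Icc_eq_cons_Ico hab)
  have hIoc := congrArg (fun s => #{x ∈ s | p x}) (Icc_eq_cons_Ioc hab)
  simp only [filter_cons] at hIco hIoc
  split_ifs at hIco hIoc <;> simp_all

theorem zOf_eq_card_filter (e : ℕ) (B : Set ℤ) (q : ℤ) :
    zOf e B q = #{t ∈ Ioc (q - e) q | t ∉ B} := by
  rw [zOf, ← Set.ncard_coe_finset]
  congr 1
  ext t
  simp [and_assoc]

theorem zOf_conj_eq_card_filter (e : ℕ) (B : Set ℤ) (q : ℤ) :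
    zOf e {x : ℤ | 1 - x ∉ B} (1 - q + e) = #{s ∈ Ico (q - e) q | s ∈ B} := by
  rw [zOf_eq_card_filter]
  refine card_nbij' (1 - ·) (1 - ·) ?_ ?_ ?_ ?_ <;> intro t <;> simp <;> grind

theorem zOf_add_zOf_conj (e : ℕ) (B : Set ℤ) (q : ℤ) :
    (zOf e B q : ℤ) + zOf e {x : ℤ | 1 - x ∉ B} (1 - q + e) =
      e - (if q ∈ B then 1 else 0) + (if q - e ∈ B then 1 else 0) := by
  rw [zOf_conj_eq_card_filter, zOf_eq_card_filter]
  have hshift := card_filter_Ico_add_ite (· ∈ B) (show q - e ≤ q by omega)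
  have hsplit := card_filter_add_card_filter_not (s := Ioc (q - e) q) (· ∈ B)
  rw [Int.card_Ioc, sub_sub_cancel, Int.toNat_natCast] at hsplit
  split_ifs at hshift ⊢ <;> omega

theorem IsStart.conj {e : ℕ} (he : 0 < e) {B : Set ℤ} {x : ℤ} (hx : IsStart e B x) :
    IsStart e {y : ℤ | 1 - y ∉ B} (1 - x + e) := by
  obtain ⟨⟨b, hb, hxb, hbx⟩, ⟨c, hc, hcx, hxc⟩⟩ := hx
  have hce : (e : ℤ) ≤ x - c := Int.le_of_dvd (by omega) hxc
  refine ⟨⟨1 - c, by simpa using hc, by omega, ?_⟩, ⟨1 - b, by simpa using hb, by omega, ?_⟩⟩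
  · rw [show 1 - c - (1 - x + e) = x - c - e by ring]
    exact dvd_sub hxc dvd_rfl
  · rw [show 1 - x + e - (1 - b) = b - x + e by ring]
    exact dvd_add hbx dvd_rfl

theorem setOf_isStart_conj {e : ℕ} (he : 0 < e) (B : Set ℤ) :
    {x | IsStart e {y : ℤ | 1 - y ∉ B} x} =
      (fun x : ℤ => 1 - x + e) '' {x | IsStart e B x} := by
  ext x
  constructor
  · intro hx
    have hconj : {y : ℤ | 1 - y ∉ {y : ℤ | 1 - y ∉ B}} = B := by ext; simp
    refine ⟨1 - x + e, ?_, by ring⟩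
    simpa [hconj] using hx.conj he
  · rintro ⟨y, hy, rfl⟩
    exact hy.conj he

theorem range_eq_setOf {ι α : Type*} {f : ι → α} {p : α → Prop}
    (hf : ∀ i, p (f i)) (hp : ∀ x, p x → ∃ i, f i = x) : Set.range f = {x | p x} :=
  Set.ext fun x => ⟨by rintro ⟨i, rfl⟩; exact hf i, hp x⟩

theorem stmt_18_general (e : ℕ) (he : 2 ≤ e) (w : ℕ) (lam : ℕ → ℕ)
    (q q' : Fin w → ℤ)
    (hqmono : StrictMono q) (hq'mono : StrictMono q')
    (hqstart : ∀ i, IsStart e (betaSet lam) (q i))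
    (hqall : ∀ x, IsStart e (betaSet lam) x → ∃ i, q i = x)
    (hq'start : ∀ i, IsStart e {x : ℤ | 1 - x ∉ betaSet lam} (q' i))
    (hq'all : ∀ x, IsStart e {x : ℤ | 1 - x ∉ betaSet lam} x → ∃ i, q' i = x) :
    (∀ i : Fin w, q' i = 1 - q (Fin.rev i) + e) ∧
    (∀ i : Fin w,
      (zOf e (betaSet lam) (q i) : ℤ) +
        (zOf e {x : ℤ | 1 - x ∉ betaSet lam} (q' (Fin.rev i)) : ℤ) =
      (e : ℤ) - (if q i ∈ betaSet lam then 1 else 0) +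
        (if q i - e ∈ betaSet lam then 1 else 0)) := by
  have he0 : 0 < e := by omega
  have hreflect : StrictMono fun i => 1 - q (Fin.rev i) + e := fun i j hij => by
    have := hqmono (Fin.rev_lt_rev.mpr hij)
    dsimp only
    omega
  have hrange : Set.range q' = Set.range fun i => 1 - q (Fin.rev i) + e := by
    rw [range_eq_setOf hq'start hq'all, setOf_isStart_conj he0, ← range_eq_setOf hqstart hqall,
      ← Set.range_comp, ← Fin.rev_surjective.range_comp]
    rfl
  have hq' : ∀ i, q' i = 1 - q (Fin.rev i) + e :=
    congrFun ((hq'mono.range_inj hreflect).mp hrange)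
  refine ⟨hq', fun i => ?_⟩
  rw [hq', Fin.rev_rev]
  exact zOf_add_zOf_conj e _ (q i)

/-- Let `λ` be a hook-quotient partition of `e`-weight `w`, with bead-movement
starting positions `q₁ < ... < q_w`, and let `λ'` (with `β(λ') = {x : 1 - x ∉ β(λ)}`)
have starting positions `q'₁ < ... < q'_w`.  Then `q'ᵢ = 1 - q_{w+1-i} + e` and
`zᵢ + z'_{w+1-i} = e - [qᵢ ∈ β(λ)] + [qᵢ - e ∈ β(λ)]`. -/
theorem stmt_18 (e : ℕ) (he : 2 ≤ e) (w : ℕ) (lam : ℕ → ℕ)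
    (hanti : Antitone lam) (hev : ∃ N, ∀ i ≥ N, lam i = 0)
    (hquot : HookQuotient e (betaSet lam))
    (q q' : Fin w → ℤ)
    (hqmono : StrictMono q) (hq'mono : StrictMono q')
    (hqstart : ∀ i, IsStart e (betaSet lam) (q i))
    (hqall : ∀ x, IsStart e (betaSet lam) x → ∃ i, q i = x)
    (hq'start : ∀ i, IsStart e {x : ℤ | 1 - x ∉ betaSet lam} (q' i))
    (hq'all : ∀ x, IsStart e {x : ℤ | 1 - x ∉ betaSet lam} x → ∃ i, q' i = x) :
    (∀ i : Fin w, q' i = 1 - q (Fin.rev i) + e) ∧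
    (∀ i : Fin w,
      (zOf e (betaSet lam) (q i) : ℤ) +
        (zOf e {x : ℤ | 1 - x ∉ betaSet lam} (q' (Fin.rev i)) : ℤ) =
      (e : ℤ) - (if q i ∈ betaSet lam then 1 else 0) +
        (if q i - e ∈ betaSet lam then 1 else 0)) :=
  stmt_18_general e he w lam q q' hqmono hq'mono hqstart hqall hq'start hq'all
end

section
/- Let λ be a partition of e-weight w with z(λ) = (z₁, ..., z_w). Then λ is e-regular (no e consecutive equal nonzero parts) if and only if zᵢ > 0 for all i ∈ {1, ..., w}. -/
/-!
Read on the abacus, `e` equal nonzero parts `λᵢ = … = λᵢ₊ₑ₋₁` are exactly a window `(q - e, q]`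
of `e` consecutive beads (with `q = λᵢ - i - 1`) lying above some gap. A bead movement `(b; q)`
of armlength zero also gives such a window: its arm `(q - e, q]` is full, and since
`i < wt(b)` there is a gap on the runner of `b` below `q`. Conversely, if `(q - e, q]` is full
above a gap, the highest gap `g` below `q` satisfies `g + e ≤ q`, and `(g + e; g + e)` is a bead
movement of armlength zero.
-/

namespace BetaSet

section Abacus

variable {e : ℕ} {B : Set ℤ}

theorem zOf_eq_zero_iff {q : ℤ} : zOf e B q = 0 ↔ ∀ t, q - e < t → t ≤ q → t ∈ B := by
  have hfin : {t : ℤ | q - e < t ∧ t ≤ q ∧ t ∉ B}.Finite :=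
    (Set.finite_Ioc (q - e) q).subset fun t ht => ⟨ht.1, ht.2.1⟩
  rw [zOf, Set.ncard_eq_zero hfin, Set.eq_empty_iff_forall_notMem]
  simp only [Set.mem_ofPred_eq, not_and, not_not]

theorem exists_lt_notMem_of_lt_wt {b : ℤ} {i : ℕ} (hi : i < wt e B b) :
    ∃ g < b - i * e, g ∉ B := by
  by_contra! h
  have hsub : {x : ℤ | x < b ∧ (e : ℤ) ∣ b - x ∧ x ∉ B} ⊆
      (fun m : ℕ => b - m * e) '' Set.Icc 1 i := by
    rintro x ⟨hxb, ⟨m, hm⟩, hxB⟩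
    have hx : b - i * e ≤ x := not_lt.1 fun hlt => hxB (h x hlt)
    have hm1 : 1 ≤ m := by nlinarith
    have hmi : m ≤ i := by nlinarith
    exact ⟨m.toNat, ⟨by omega, by omega⟩, by
      show b - (m.toNat : ℤ) * e = x
      rw [Int.toNat_of_nonneg (by omega)]
      linarith⟩
  have hcard := (Set.ncard_le_ncard hsub ((Set.finite_Icc 1 i).image _)).trans
    (Set.ncard_image_le (Set.finite_Icc 1 i))
  rw [Set.ncard_Icc_nat, ← wt] at hcard
  omega

theorem wt_pos_of_sub_notMem {M c : ℤ} (he : 0 < e) (hB : ∀ x ≤ M, x ∈ B) (hc : c - e ∉ B) :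
    0 < wt e B c := by
  have hfin : {x : ℤ | x < c ∧ (e : ℤ) ∣ c - x ∧ x ∉ B}.Finite :=
    (Set.finite_Ioo M c).subset fun x hx => ⟨not_le.1 fun h => hx.2.2 (hB x h), hx.1⟩
  exact (Set.ncard_pos hfin).2 ⟨c - e, by omega, ⟨1, by ring⟩, hc⟩

theorem exists_greatest_notMem_lt {q : ℤ} (h : ∃ g < q, g ∉ B) :
    ∃ g < q, g ∉ B ∧ ∀ t, g < t → t < q → t ∈ B := by
  obtain ⟨g, ⟨hgq, hgB⟩, hmax⟩ :=
    Int.exists_greatest_of_bdd (P := fun g => g < q ∧ g ∉ B) ⟨q, fun _ hz => hz.1.le⟩ h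
  exact ⟨g, hgq, hgB, fun t hgt htq => by_contra fun htB => (hmax t ⟨htq, htB⟩).not_gt hgt⟩

theorem exists_isBM_zOf_eq_zero_iff {M : ℤ} (he : 0 < e) (hB : ∀ x ≤ M, x ∈ B) :
    (∃ b q, IsBM e B b q ∧ zOf e B q = 0) ↔
      ∃ q : ℤ, (∀ t : ℤ, q - e < t → t ≤ q → t ∈ B) ∧ ∃ g < q, g ∉ B := by
  constructor
  · rintro ⟨b, q, ⟨-, i, rfl, hi⟩, hz⟩
    exact ⟨_, zOf_eq_zero_iff.1 hz, exists_lt_notMem_of_lt_wt hi⟩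
  · rintro ⟨q, hfull, hgap⟩
    obtain ⟨g, hgq, hgB, hmax⟩ := exists_greatest_notMem_lt hgap
    have hge : g + e ≤ q := not_lt.1 fun h => hgB (hfull g (by omega) hgq.le)
    have hocc : ∀ t, g < t → t ≤ g + e → t ∈ B := fun t h1 h2 =>
      (lt_or_eq_of_le (h2.trans hge)).elim (hmax t h1) fun h => h ▸ hfull q (by omega) le_rfl
    refine ⟨g + e, g + e, ⟨hocc _ (by omega) le_rfl, 0, by simp, ?_⟩, ?_⟩
    · exact wt_pos_of_sub_notMem he hB (by simpa using hgB)
    · exact zOf_eq_zero_iff.2 fun t h1 h2 => hocc t (by omega) h2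

end Abacus

section Partition

variable {lam : ℕ → ℕ}

def beta (lam : ℕ → ℕ) (j : ℕ) : ℤ := (lam j : ℤ) - ((j : ℤ) + 1)

theorem beta_mem_betaSet (lam : ℕ → ℕ) (j : ℕ) : beta lam j ∈ betaSet lam := ⟨j, rfl⟩

theorem beta_strictAnti (hanti : Antitone lam) : StrictAnti (beta lam) := by
  intro m n hmn
  have := hanti hmn.le
  simp only [beta]
  omega

theorem le_beta_succ_of_lt_beta (hanti : Antitone lam) {x : ℤ} {j : ℕ}
    (hx : x ∈ betaSet lam) (hlt : x < beta lam j) : x ≤ beta lam (j + 1) := by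
  obtain ⟨m, rfl⟩ := hx
  change beta lam m < beta lam j at hlt
  exact (beta_strictAnti hanti).antitone
    (Nat.succ_le_of_lt ((beta_strictAnti hanti).lt_iff_gt.1 hlt))

theorem beta_add_of_forall_mem (hanti : Antitone lam) {j k : ℕ}
    (h : ∀ k' ≤ k, beta lam j - k' ∈ betaSet lam) : beta lam (j + k) = beta lam j - k := by
  induction k with
  | zero => simp
  | succ k ih =>
    have ih := ih fun k' hk' => h k' (by omega)
    have hle := le_beta_succ_of_lt_beta hanti (h (k + 1) le_rfl) (by rw [ih]; push_cast; omega)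
    have hlt := beta_strictAnti hanti (by omega : j + k < j + k + 1)
    rw [ih] at hlt
    rw [← add_assoc]
    push_cast at hle ⊢
    omega

theorem mem_betaSet_of_le (hanti : Antitone lam) {j : ℕ} (h0 : lam j = 0) {x : ℤ}
    (hx : x ≤ -j - 1) : x ∈ betaSet lam := by
  have hn : ((-x - 1).toNat : ℤ) = -x - 1 := Int.toNat_of_nonneg (by omega)
  have h0n : lam (-x - 1).toNat = 0 := Nat.le_zero.1 (h0 ▸ hanti (by omega))
  exact ⟨(-x - 1).toNat, by rw [h0n]; omega⟩

theorem ne_zero_iff_exists_notMem_lt_beta (hanti : Antitone lam) {N : ℕ} (hN : lam N = 0)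
    {j : ℕ} : lam j ≠ 0 ↔ ∃ g < beta lam j, g ∉ betaSet lam := by
  constructor
  · intro hj
    by_contra! h
    have hrun := beta_add_of_forall_mem hanti (j := j) (k := N) fun k' _ =>
      k'.eq_zero_or_pos.elim (fun hk' => by simpa [hk'] using beta_mem_betaSet lam j)
        fun hk' => h _ (by omega)
    have h0 : lam (j + N) = 0 := Nat.le_zero.1 (hN ▸ hanti (by omega))
    simp only [beta, h0] at hrun
    push_cast at hrun
    omega
  · rintro ⟨g, hg, hgB⟩ h0
    exact hgB (mem_betaSet_of_le hanti h0 (by simp only [beta, h0] at hg; push_cast at hg; omega))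

theorem exists_equal_parts_iff {e N : ℕ} (he : 0 < e) (hanti : Antitone lam) (hN : lam N = 0) :
    (∃ i : ℕ, lam i ≠ 0 ∧ ∀ k < e, lam (i + k) = lam i) ↔
      ∃ q : ℤ, (∀ t : ℤ, q - e < t → t ≤ q → t ∈ betaSet lam) ∧ ∃ g < q, g ∉ betaSet lam := by
  constructor
  · rintro ⟨i, hi, hparts⟩
    refine ⟨beta lam i, fun t h1 h2 => ⟨i + (beta lam i - t).toNat, ?_⟩,
      (ne_zero_iff_exists_notMem_lt_beta hanti hN).1 hi⟩
    have := hparts (beta lam i - t).toNat (by omega)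
    simp only [beta] at this h1 h2 ⊢
    push_cast
    omega
  · rintro ⟨q, hfull, hgap⟩
    obtain ⟨j, hj⟩ := hfull q (by omega) le_rfl
    obtain rfl : q = beta lam j := hj
    refine ⟨j, (ne_zero_iff_exists_notMem_lt_beta hanti hN).2 hgap, fun k hk => ?_⟩
    have := beta_add_of_forall_mem hanti (k := k) fun k' hk' =>
      hfull (beta lam j - k') (by omega) (by omega)
    simp only [beta] at this
    push_cast at this
    omega

end Partition

end BetaSet

open BetaSet in
/-- A partition is `e`-regular iff every component of `z(λ)` is positive, i.e.
iff every bead movement of `λ` has positive armlength. -/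
theorem stmt_19 (e : ℕ) (he : 2 ≤ e) (lam : ℕ → ℕ)
    (hanti : Antitone lam) (hev : ∃ N, ∀ i ≥ N, lam i = 0) :
    (¬ ∃ i : ℕ, lam i ≠ 0 ∧ ∀ k < e, lam (i + k) = lam i) ↔
      ∀ b q : ℤ, IsBM e (betaSet lam) b q → 0 < zOf e (betaSet lam) q := by
  obtain ⟨N, hN⟩ := hev
  have he' : 0 < e := by omega
  have hN0 : lam N = 0 := hN N le_rfl
  rw [exists_equal_parts_iff he' hanti hN0,
    ← exists_isBM_zOf_eq_zero_iff he' fun _ hx => mem_betaSet_of_le hanti hN0 hx]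
  simp only [not_exists, not_and, pos_iff_ne_zero]
end
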